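/- arXiv:2202.13411 — 3 statements merged into one kernel-verified Lean document; each statement's English description precedes it below -/
import Mathlib

section
/- (Range identity under norm equivalence.) Let X, V, H be Hilbert spaces, Q : X → H and S : X → V bounded linear operators such that there exist constants c, C > 0 with c‖Sx‖_V ≤ ‖Qx‖_H ≤ C‖Sx‖_V for all x ∈ X. Then Range(Q*) = Range(S*). -/
/-!
If `‖Q x‖ ≤ C ‖S x‖`, then `S x ↦ Q x` is a well-defined bounded operator `T` on the range of `S`,
so `Q = T S`. For `h ∈ H` the functional `S x ↦ ⟪h, Q x⟫` is therefore bounded on `range S`;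
extending it by Hahn–Banach and representing it by Riesz gives `w` with `S* w = Q* h`.
Hence `range Q* ⊆ range S*`, and the lower bound gives the reverse inclusion.
-/

open scoped InnerProductSpace

namespace LinearMap

variable {R M N P : Type*} [Ring R] [AddCommGroup M] [Module R M] [AddCommGroup N] [Module R N]
  [AddCommGroup P] [Module R P]

noncomputable def rangeLift (S : M →ₗ[R] N) (Q : M →ₗ[R] P) (h : ker S ≤ ker Q) :
    range S →ₗ[R] P :=
  (ker S).liftQ Q h ∘ₗ S.quotKerEquivRange.symm.toLinearMap

@[simp]
theorem rangeLift_rangeRestrict (S : M →ₗ[R] N) (Q : M →ₗ[R] P) (h : ker S ≤ ker Q) (x : M) :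
    S.rangeLift Q h (S.rangeRestrict x) = Q x := by
  change (ker S).liftQ Q h (S.quotKerEquivRange.symm ⟨S x, mem_range_self S x⟩) = Q x
  rw [quotKerEquivRange_symm_apply_image, Submodule.mkQ_apply, Submodule.liftQ_apply]

variable {F G : Type*} [SeminormedAddCommGroup F] [Module R F] [NormedAddCommGroup G] [Module R G]

theorem ker_le_ker_of_norm_le (S : M →ₗ[R] F) (Q : M →ₗ[R] G) {C : ℝ}
    (hb : ∀ x, ‖Q x‖ ≤ C * ‖S x‖) : ker S ≤ ker Q := fun x hx =>
  norm_le_zero_iff.mp <| by simpa [mem_ker.mp hx] using hb x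

theorem norm_rangeLift_le (S : M →ₗ[R] F) (Q : M →ₗ[R] G) {C : ℝ}
    (hb : ∀ x, ‖Q x‖ ≤ C * ‖S x‖) (v : range S) :
    ‖S.rangeLift Q (ker_le_ker_of_norm_le S Q hb) v‖ ≤ C * ‖v‖ := by
  obtain ⟨x, rfl⟩ := S.surjective_rangeRestrict v
  simpa using hb x

end LinearMap

section InnerProductSpace

open ContinuousLinearMap InnerProductSpace

variable {𝕜 E F G : Type*} [RCLike 𝕜]

theorem Submodule.exists_inner_eq_of_strongDual [NormedAddCommGroup F] [InnerProductSpace 𝕜 F]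
    [CompleteSpace F] (p : Submodule 𝕜 F) (φ : StrongDual 𝕜 p) :
    ∃ w : F, ∀ v : p, ⟪w, v⟫_𝕜 = φ v := by
  obtain ⟨g, hg, -⟩ := exists_extension_norm_eq p φ
  exact ⟨(toDual 𝕜 F).symm g, fun v => by rw [toDual_symm_apply, hg]⟩

theorem ContinuousLinearMap.range_adjoint_subset_of_norm_le
    [NormedAddCommGroup E] [InnerProductSpace 𝕜 E] [CompleteSpace E]
    [NormedAddCommGroup F] [InnerProductSpace 𝕜 F] [CompleteSpace F]
    [NormedAddCommGroup G] [InnerProductSpace 𝕜 G] [CompleteSpace G]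
    (Q : E →L[𝕜] G) (S : E →L[𝕜] F) {C : ℝ} (hb : ∀ x, ‖Q x‖ ≤ C * ‖S x‖) :
    Set.range (adjoint Q) ⊆ Set.range (adjoint S) := by
  rintro _ ⟨h, rfl⟩
  let T : LinearMap.range (S : E →ₗ[𝕜] F) →L[𝕜] G :=
    (LinearMap.rangeLift _ _ _).mkContinuous C (LinearMap.norm_rangeLift_le (S : E →ₗ[𝕜] F) Q hb)
  obtain ⟨w, hw⟩ := Submodule.exists_inner_eq_of_strongDual _ ((innerSL 𝕜 h).comp T)
  refine ⟨w, ext_inner_right 𝕜 fun x => ?_⟩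
  rw [adjoint_inner_left, adjoint_inner_left]
  simpa [T] using hw ((S : E →ₗ[𝕜] F).rangeRestrict x)

end InnerProductSpace

theorem stmt7_general
    {X V H : Type*}
    [NormedAddCommGroup X] [InnerProductSpace ℂ X] [CompleteSpace X]
    [NormedAddCommGroup V] [InnerProductSpace ℂ V] [CompleteSpace V]
    [NormedAddCommGroup H] [InnerProductSpace ℂ H] [CompleteSpace H]
    (Q : X →L[ℂ] H) (S : X →L[ℂ] V)
    (c C : ℝ) (hc : 0 < c)
    (hbound : ∀ x : X, c * ‖S x‖ ≤ ‖Q x‖ ∧ ‖Q x‖ ≤ C * ‖S x‖) :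
    Set.range Q.adjoint = Set.range S.adjoint :=
  (Q.range_adjoint_subset_of_norm_le S fun x => (hbound x).2).antisymm
    (S.range_adjoint_subset_of_norm_le Q fun x => (le_inv_mul_iff₀ hc).2 (hbound x).1)

/-- Range identity: if `c‖Sx‖ ≤ ‖Qx‖ ≤ C‖Sx‖` for all `x`, then `Range(Q*) = Range(S*)`. -/
theorem stmt7
    {X V H : Type*}
    [NormedAddCommGroup X] [InnerProductSpace ℂ X] [CompleteSpace X]
    [NormedAddCommGroup V] [InnerProductSpace ℂ V] [CompleteSpace V]
    [NormedAddCommGroup H] [InnerProductSpace ℂ H] [CompleteSpace H]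
    (Q : X →L[ℂ] H) (S : X →L[ℂ] V)
    (c C : ℝ) (hc : 0 < c) (hC : 0 < C)
    (hbound : ∀ x : X, c * ‖S x‖ ≤ ‖Q x‖ ∧ ‖Q x‖ ≤ C * ‖S x‖) :
    Set.range Q.adjoint = Set.range S.adjoint :=
  stmt7_general Q S c C hc hbound
end

section
/- (Regularized factorization method, abstract form.) Let A : H → H be compact, self-adjoint, positive and injective on a separable Hilbert space with eigenpairs (λ_n, x_n), and φ an admissible filter function (pointwise limit 1 as α → 0, uniformly bounded). Then for ℓ ∈ H: ℓ ∈ Range(A^{1/2}) if and only if liminf_{α→0} Σ_n (φ(λ_n; α)²/λ_n)|(x_n, ℓ)|² < ∞. -/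
/-!
Since `sqrtA` is diagonal in the eigenbasis, Picard's criterion identifies its range with the
vectors whose Picard series `∑ |(x_n, ℓ)|² / λ_n` converges. The filtered series is dominated
termwise by `C_reg²` times the Picard series, and tends to it termwise as `α → 0`; by Fatou's
lemma for series its liminf is therefore finite exactly when the Picard series is.
-/

open scoped InnerProductSpace ENNReal
open Filter Topology

namespace HilbertBasis

variable {ι 𝕜 E : Type*} [RCLike 𝕜] [NormedAddCommGroup E] [InnerProductSpace 𝕜 E]
  (b : HilbertBasis ι 𝕜 E) {T : E →L[𝕜] E} {μ : ι → 𝕜}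

theorem repr_apply_of_apply_eq_smul (hT : ∀ i, T (b i) = μ i • b i) (x : E) (i : ι) :
    b.repr (T x) i = μ i * b.repr x i := by
  classical
  have hsum := ((b.hasSum_repr x).mapL T).mapL (innerSL 𝕜 (b i))
  have hterm : ∀ j, innerSL 𝕜 (b i) (T (b.repr x j • b j)) =
      if j = i then μ i * b.repr x i else 0 := by
    intro j
    rw [map_smul, hT, smul_smul, innerSL_apply_apply, inner_smul_right,
      orthonormal_iff_ite.mp b.orthonormal]
    by_cases h : j = i
    · subst h
      simp [mul_comm]
    · simp [h, Ne.symm h]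
  rw [funext hterm] at hsum
  rw [b.repr_apply_apply, ← innerSL_apply_apply, hsum.unique (hasSum_ite_eq i _)]

theorem mem_range_iff_memℓp (hμ : ∀ i, μ i ≠ 0) (hT : ∀ i, T (b i) = μ i • b i) (y : E) :
    y ∈ Set.range T ↔ Memℓp (fun i => b.repr y i / μ i) 2 := by
  constructor
  · rintro ⟨x, rfl⟩
    simpa [b.repr_apply_of_apply_eq_smul hT, mul_div_cancel_left₀ _ (hμ _)]
      using lp.memℓp (b.repr x)
  · intro h
    refine ⟨b.repr.symm ⟨_, h⟩, b.repr.injective (lp.ext <| funext fun i => ?_)⟩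
    rw [b.repr_apply_of_apply_eq_smul hT, LinearIsometryEquiv.apply_symm_apply]
    exact mul_div_cancel₀ _ (hμ i)

end HilbertBasis

theorem memℓp_two_iff_summable_sq_norm {ι E : Type*} [NormedAddCommGroup E] {g : ι → E} :
    Memℓp g 2 ↔ Summable fun i => ‖g i‖ ^ 2 := by
  rw [memℓp_gen_iff (by norm_num)]
  norm_num [Real.rpow_two]

theorem summable_iff_tsum_ofReal_lt_top {ι : Type*} {f : ι → ℝ} (hf : ∀ i, 0 ≤ f i) :
    Summable f ↔ ∑' i, ENNReal.ofReal (f i) < ∞ :=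
  ⟨Summable.tsum_ofReal_lt_top, fun h =>
    (ENNReal.summable_toReal h.ne).congr fun i => ENNReal.toReal_ofReal (hf i)⟩

namespace ENNReal

variable {α ι : Type*} {l : Filter α} [l.NeBot] {f : α → ι → ℝ≥0∞} {c : ι → ℝ≥0∞}

theorem tsum_le_liminf_tsum (hf : ∀ i, Tendsto (f · i) l (𝓝 (c i))) :
    ∑' i, c i ≤ liminf (fun a => ∑' i, f a i) l := by
  rw [ENNReal.tsum_eq_iSup_sum]
  refine iSup_le fun s => ?_
  rw [← (tendsto_finsetSum s fun i _ => hf i).liminf_eq]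
  exact liminf_le_liminf (Eventually.of_forall fun a => ENNReal.sum_le_tsum s)

theorem liminf_tsum_lt_top_iff {C : ℝ≥0∞} (hC : C ≠ ∞) (hle : ∀ᶠ a in l, ∀ i, f a i ≤ C * c i)
    (hf : ∀ i, Tendsto (f · i) l (𝓝 (c i))) :
    liminf (fun a => ∑' i, f a i) l < ∞ ↔ ∑' i, c i < ∞ := by
  refine ⟨(tsum_le_liminf_tsum hf).trans_lt, fun h => ?_⟩
  calc liminf (fun a => ∑' i, f a i) l
      ≤ liminf (fun _ => C * ∑' i, c i) l :=
        liminf_le_liminf (hle.mono fun a ha => (ENNReal.tsum_le_tsum ha).trans_eq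
          ENNReal.tsum_mul_left)
    _ = C * ∑' i, c i := liminf_const _
    _ < ∞ := ENNReal.mul_lt_top hC.lt_top h

end ENNReal

theorem stmt9_general
    {H : Type*} [NormedAddCommGroup H] [InnerProductSpace ℂ H]
    (sqrtA : H →L[ℂ] H)
    (b : HilbertBasis ℕ ℂ H) (lam : ℕ → ℝ) (lam1 : ℝ)
    (hpos : ∀ n, 0 < lam n) (hmono : Antitone lam)
    (hlam1 : lam 0 = lam1)
    (hsqrt : ∀ n, sqrtA (b n) = ((Real.sqrt (lam n) : ℂ)) • b n)
    (phi : ℝ → ℝ → ℝ) (Creg : ℝ)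
    (hphi_nonneg : ∀ t ∈ Set.Ioc (0:ℝ) lam1, ∀ α > (0:ℝ), 0 ≤ phi t α)
    (hphi_bd : ∀ t ∈ Set.Ioc (0:ℝ) lam1, ∀ α > (0:ℝ), phi t α ≤ Creg)
    (hphi_lim : ∀ t ∈ Set.Ioc (0:ℝ) lam1, Tendsto (fun α => phi t α) (𝓝[>] 0) (𝓝 1))
    (ℓ : H) :
    ℓ ∈ Set.range sqrtA ↔
      liminf (fun α => ∑' n, ENNReal.ofReal
          ((phi (lam n) α) ^ 2 / lam n * ‖⟪b n, ℓ⟫_ℂ‖ ^ 2)) (𝓝[>] 0) < ⊤ := by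
  have hmem : ∀ n, lam n ∈ Set.Ioc 0 lam1 := fun n => ⟨hpos n, hlam1 ▸ hmono n.zero_le⟩
  have hsqrt_ne : ∀ n, (Real.sqrt (lam n) : ℂ) ≠ 0 := fun n =>
    Complex.ofReal_ne_zero.mpr (Real.sqrt_pos.mpr (hpos n)).ne'
  have hpicard : ∀ n, ‖b.repr ℓ n / Real.sqrt (lam n)‖ ^ 2 = ‖⟪b n, ℓ⟫_ℂ‖ ^ 2 / lam n := by
    intro n
    rw [b.repr_apply_apply, norm_div, Complex.norm_real, Real.norm_of_nonneg (Real.sqrt_nonneg _),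
      div_pow, Real.sq_sqrt (hpos n).le]
  rw [b.mem_range_iff_memℓp hsqrt_ne hsqrt, memℓp_two_iff_summable_sq_norm, funext hpicard,
    summable_iff_tsum_ofReal_lt_top fun n => div_nonneg (sq_nonneg _) (hpos n).le]
  refine (ENNReal.liminf_tsum_lt_top_iff (ENNReal.ofReal_ne_top (r := Creg ^ 2)) ?_
    fun n => ?_).symm
  · filter_upwards [self_mem_nhdsWithin] with α (hα : 0 < α) n
    rw [← ENNReal.ofReal_mul (sq_nonneg _), div_mul_eq_mul_div, mul_div_assoc]
    exact ENNReal.ofReal_le_ofReal <| mul_le_mul_of_nonneg_right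
      (pow_le_pow_left₀ (hphi_nonneg _ (hmem n) α hα) (hphi_bd _ (hmem n) α hα) 2)
      (div_nonneg (sq_nonneg _) (hpos n).le)
  · have hlim := (((hphi_lim _ (hmem n)).pow 2).div_const (lam n)).mul_const (‖⟪b n, ℓ⟫_ℂ‖ ^ 2)
    rw [one_pow, one_div_mul_eq_div] at hlim
    exact ENNReal.tendsto_ofReal hlim

/-- Regularized factorization method, abstract form:
`ℓ ∈ Range(A^{1/2})` iff `liminf_{α→0} ∑ (φ(λ_n;α)²/λ_n)|(x_n,ℓ)|² < ∞`. -/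
theorem stmt9
    {H : Type*} [NormedAddCommGroup H] [InnerProductSpace ℂ H] [CompleteSpace H]
    (A sqrtA : H →L[ℂ] H)
    (hAcomp : IsCompactOperator A) (hAsa : IsSelfAdjoint A)
    (hApos : ∀ x : H, 0 ≤ (⟪x, A x⟫_ℂ).re) (hAinj : Function.Injective A)
    (b : HilbertBasis ℕ ℂ H) (lam : ℕ → ℝ) (lam1 : ℝ)
    (hpos : ∀ n, 0 < lam n) (hmono : Antitone lam)
    (hlim : Tendsto lam atTop (𝓝 0)) (hlam1 : lam 0 = lam1)
    (heig : ∀ n, A (b n) = (lam n : ℂ) • b n)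
    (hsqrt : ∀ n, sqrtA (b n) = ((Real.sqrt (lam n) : ℂ)) • b n)
    (phi : ℝ → ℝ → ℝ) (Creg : ℝ)
    (hphi_nonneg : ∀ t ∈ Set.Ioc (0:ℝ) lam1, ∀ α > (0:ℝ), 0 ≤ phi t α)
    (hphi_bd : ∀ t ∈ Set.Ioc (0:ℝ) lam1, ∀ α > (0:ℝ), phi t α ≤ Creg)
    (hphi_lim : ∀ t ∈ Set.Ioc (0:ℝ) lam1, Tendsto (fun α => phi t α) (𝓝[>] 0) (𝓝 1))
    (ℓ : H) :
    ℓ ∈ Set.range sqrtA ↔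
      liminf (fun α => ∑' n, ENNReal.ofReal
          ((phi (lam n) α) ^ 2 / lam n * ‖⟪b n, ℓ⟫_ℂ‖ ^ 2)) (𝓝[>] 0) < ⊤ :=
  stmt9_general sqrtA b lam lam1 hpos hmono hlam1 hsqrt phi Creg hphi_nonneg hphi_bd hphi_lim ℓ
end

section
/- Suppose A : X → X is a positive compact self-adjoint injective operator on a Hilbert space X with A = S*TS, where S : X → V is compact and injective, and T : V → V is bounded, self-adjoint, positive, and strictly coercive on Range(S). Then Range(A^{1/2}) = Range(S*). -/
open scoped InnerProductSpace InnerProduct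

/-!
With `Q = A^{1/2}` self-adjoint, `‖Q x‖² = re ⟪x, A x⟫ = re ⟪S x, T (S x)⟫`, which lies between
`β ‖S x‖²` and `‖T‖ ‖S x‖²`. As `Q† = Q` and `(S†)† = S`, these are two-sided bounds between the
adjoints of `Q` and `S†`, and Douglas' lemma (`‖A† x‖ ≤ c ‖B† x‖` implies `range A ⊆ range B`,
because then `A† = u ∘ B†` for a bounded `u`) gives both inclusions.
-/

namespace ContinuousLinearMap

theorem re_inner_apply_le_opNorm_mul_sq {𝕜 E : Type*} [RCLike 𝕜] [NormedAddCommGroup E]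
    [InnerProductSpace 𝕜 E] (T : E →L[𝕜] E) (v : E) :
    RCLike.re ⟪v, T v⟫_𝕜 ≤ ‖T‖ * ‖v‖ ^ 2 :=
  calc RCLike.re ⟪v, T v⟫_𝕜 ≤ ‖v‖ * ‖T v‖ := re_inner_le_norm v (T v)
    _ ≤ ‖v‖ * (‖T‖ * ‖v‖) := by gcongr; exact T.le_opNorm v
    _ = ‖T‖ * ‖v‖ ^ 2 := by ring

section Factorization

variable {𝕜 E F G : Type*} [RCLike 𝕜]
  [NormedAddCommGroup E] [NormedSpace 𝕜 E]
  [NormedAddCommGroup F] [InnerProductSpace 𝕜 F] [CompleteSpace F]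
  [NormedAddCommGroup G] [NormedSpace 𝕜 G] [CompleteSpace G]

/-- `u` is the bounded extension of `g x ↦ f x` from `range g` to its closure,
precomposed with the orthogonal projection onto that closure. -/
theorem exists_eq_comp_of_norm_le (f : E →L[𝕜] G) (g : E →L[𝕜] F) (c : ℝ)
    (h : ∀ x, ‖f x‖ ≤ c * ‖g x‖) : ∃ u : F →L[𝕜] G, f = u ∘L g := by
  set K := (g : E →ₗ[𝕜] F).range.topologicalClosure
  have hgK : ∀ x, g x ∈ K := fun x => (g : E →ₗ[𝕜] F).range.le_topologicalClosure ⟨x, rfl⟩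
  let e : E →ₗ[𝕜] K := (g : E →ₗ[𝕜] F).codRestrict K hgK
  have he : DenseRange e := by
    rw [DenseRange, Subtype.dense_iff, ← Set.range_comp]
    exact (g : E →ₗ[𝕜] F).range.topologicalClosure_coe.subset
  refine ⟨(f : E →ₗ[𝕜] G).extendOfNorm e ∘L K.orthogonalProjectionOnto, ?_⟩
  ext x
  have hx : K.orthogonalProjectionOnto (g x) = e x :=
    K.orthogonalProjectionOnto_mem_subspace_eq_self ⟨g x, hgK x⟩
  simp only [comp_apply, hx, LinearMap.extendOfNorm_eq he ⟨c, h⟩, coe_coe]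

end Factorization

section Hilbert

variable {𝕜 H₁ H₂ H₃ : Type*} [RCLike 𝕜]
  [NormedAddCommGroup H₁] [InnerProductSpace 𝕜 H₁] [CompleteSpace H₁]
  [NormedAddCommGroup H₂] [InnerProductSpace 𝕜 H₂] [CompleteSpace H₂]
  [NormedAddCommGroup H₃] [InnerProductSpace 𝕜 H₃] [CompleteSpace H₃]

theorem range_subset_range_of_norm_adjoint_le (A : H₁ →L[𝕜] H₃) (B : H₂ →L[𝕜] H₃) (c : ℝ)
    (h : ∀ x, ‖(A†) x‖ ≤ c * ‖(B†) x‖) : Set.range A ⊆ Set.range B := by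
  obtain ⟨u, hu⟩ := exists_eq_comp_of_norm_le (A†) (B†) c h
  have hA : A = B ∘L u† := by
    rw [← adjoint_adjoint A, hu, adjoint_comp, adjoint_adjoint]
  rintro _ ⟨x, rfl⟩
  exact ⟨(u†) x, by rw [hA, comp_apply]⟩

theorem norm_apply_sq_eq_re_inner_of_adjoint_comp_self_eq (Q : H₁ →L[𝕜] H₁) (S : H₁ →L[𝕜] H₂)
    (T : H₂ →L[𝕜] H₂) (h : Q† ∘L Q = S† ∘L (T ∘L S)) (x : H₁) :
    ‖Q x‖ ^ 2 = RCLike.re ⟪S x, T (S x)⟫_𝕜 := by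
  rw [apply_norm_sq_eq_inner_adjoint_right, h, comp_apply, adjoint_inner_right, comp_apply]

end Hilbert

end ContinuousLinearMap

theorem Real.le_sqrt_mul_of_sq_le_mul_sq {a b c : ℝ} (ha : 0 ≤ a) (hb : 0 ≤ b)
    (h : a ^ 2 ≤ c * b ^ 2) : a ≤ √c * b := by
  have := Real.sqrt_le_sqrt h
  rwa [Real.sqrt_sq ha, Real.sqrt_mul' c (sq_nonneg b), Real.sqrt_sq hb] at this

open ContinuousLinearMap in
theorem stmt17_general
    {X V : Type*}
    [NormedAddCommGroup X] [InnerProductSpace ℂ X] [CompleteSpace X]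
    [NormedAddCommGroup V] [InnerProductSpace ℂ V] [CompleteSpace V]
    (A sqrtA : X →L[ℂ] X) (S : X →L[ℂ] V) (T : V →L[ℂ] V)
    (β : ℝ) (hβ : 0 < β)
    (hcoer : ∀ x : X, β * ‖S x‖ ^ 2 ≤ (⟪S x, T (S x)⟫_ℂ).re)
    (hfac : A = S.adjoint.comp (T.comp S))
    (hsqrt_sa : IsSelfAdjoint sqrtA)
    (hsqrt : sqrtA.comp sqrtA = A) :
    Set.range sqrtA = Set.range S.adjoint := by
  have hQ : sqrtA† = sqrtA := isSelfAdjoint_iff'.mp hsqrt_sa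
  have hnorm : ∀ x, ‖sqrtA x‖ ^ 2 = (⟪S x, T (S x)⟫_ℂ).re :=
    norm_apply_sq_eq_re_inner_of_adjoint_comp_self_eq sqrtA S T (by rw [hQ, hsqrt, hfac])
  refine (range_subset_range_of_norm_adjoint_le _ _ √‖T‖ fun x => ?_).antisymm
    (range_subset_range_of_norm_adjoint_le _ _ √β⁻¹ fun x => ?_)
  all_goals rw [hQ, adjoint_adjoint]
  · refine Real.le_sqrt_mul_of_sq_le_mul_sq (norm_nonneg _) (norm_nonneg _) ?_
    rw [hnorm]
    exact re_inner_apply_le_opNorm_mul_sq T (S x)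
  · refine Real.le_sqrt_mul_of_sq_le_mul_sq (norm_nonneg _) (norm_nonneg _) ?_
    rw [hnorm, inv_mul_eq_div, le_div_iff₀' hβ]
    exact hcoer x

/-- Range identity for the factorization `A = S*TS`: `Range(A^{1/2}) = Range(S*)`. -/
theorem stmt17
    {X V : Type*}
    [NormedAddCommGroup X] [InnerProductSpace ℂ X] [CompleteSpace X]
    [NormedAddCommGroup V] [InnerProductSpace ℂ V] [CompleteSpace V]
    (A sqrtA : X →L[ℂ] X) (S : X →L[ℂ] V) (T : V →L[ℂ] V)
    (hAcomp : IsCompactOperator A) (hAsa : IsSelfAdjoint A)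
    (hApos : ∀ x : X, 0 ≤ (⟪x, A x⟫_ℂ).re) (hAinj : Function.Injective A)
    (hScomp : IsCompactOperator S) (hSinj : Function.Injective S)
    (hTsa : IsSelfAdjoint T) (hTpos : ∀ v : V, 0 ≤ (⟪v, T v⟫_ℂ).re)
    (β : ℝ) (hβ : 0 < β)
    (hcoer : ∀ x : X, β * ‖S x‖ ^ 2 ≤ (⟪S x, T (S x)⟫_ℂ).re)
    (hfac : A = S.adjoint.comp (T.comp S))
    (hsqrt_sa : IsSelfAdjoint sqrtA)
    (hsqrt_pos : ∀ x : X, 0 ≤ (⟪x, sqrtA x⟫_ℂ).re)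
    (hsqrt : sqrtA.comp sqrtA = A) :
    Set.range sqrtA = Set.range S.adjoint :=
  stmt17_general A sqrtA S T β hβ hcoer hfac hsqrt_sa hsqrt
end
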